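/- Let G be an undirected bipartite graph G = (U ∪ V, E) where each vertex of U has profit 1 and weight 0 and each vertex of V has profit 0 and weight 1. Then for any integer k >= 1, the maximum profit of a 1-neighbour set of total weight at most k equals the maximum, over subsets R of V with |R| <= k, of |N(R)|, the number of vertices of U having a neighbour in R, provided every vertex of U has at least one neighbour in V. -/

import Mathlib

/-!
A 1-neighbour set `S` of weight at most `k` gains nothing from its `A`-vertices beyond what its
`B`-vertices already cover: each `u ∈ S ∩ A` is not isolated, so it must have a neighbour in `S`,
and that neighbour lies in `S ∩ B`. Conversely, for `R ⊆ B` the set `R ∪ N(R)` is a 1-neighbour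
set of weight `|R|` and profit `|N(R)|`, since every non-isolated vertex of `R` has all its
neighbours in `N(R)`. So the two families of values dominate each other and have the same supremum.
-/

namespace SimpleGraph

variable {W : Type*} (G : SimpleGraph W)

def IsOneNeighbourSet (S : Finset W) : Prop :=
  ∀ v ∈ S, (∃ x ∈ S, G.Adj v x) ∨ ∀ x, ¬ G.Adj v x

variable [DecidableRel G.Adj]

def coveredBy (A R : Finset W) : Finset W :=
  A.filter fun u => ∃ r ∈ R, G.Adj u r

variable {G}

theorem inter_subset_coveredBy_of_isOneNeighbourSet [DecidableEq W] {S A B : Finset W}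
    (hS : G.IsOneNeighbourSet S) (hA : ∀ u ∈ A, ∃ v, G.Adj u v)
    (hAB : ∀ u ∈ A, ∀ v, G.Adj u v → v ∈ B) :
    S ∩ A ⊆ G.coveredBy A (S ∩ B) := by
  intro u hu
  obtain ⟨huS, huA⟩ := Finset.mem_inter.1 hu
  rcases hS u huS with ⟨x, hxS, hux⟩ | hiso
  · exact Finset.mem_filter.2 ⟨huA, x, Finset.mem_inter.2 ⟨hxS, hAB u huA x hux⟩, hux⟩
  · obtain ⟨v, huv⟩ := hA u huA
    exact absurd huv (hiso v)

theorem isOneNeighbourSet_union_coveredBy [DecidableEq W] {A R : Finset W}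
    (hR : ∀ v ∈ R, ∀ x, G.Adj v x → x ∈ A) :
    G.IsOneNeighbourSet (R ∪ G.coveredBy A R) := by
  intro v hv
  rcases Finset.mem_union.1 hv with hvR | hvF
  · by_cases hex : ∃ x, G.Adj v x
    · obtain ⟨x, hvx⟩ := hex
      refine Or.inl ⟨x, Finset.mem_union_right _ ?_, hvx⟩
      exact Finset.mem_filter.2 ⟨hR v hvR x hvx, v, hvR, hvx.symm⟩
    · exact Or.inr (not_exists.1 hex)
  · obtain ⟨-, r, hrR, hvr⟩ := Finset.mem_filter.1 hvF
    exact Or.inl ⟨r, Finset.mem_union_left _ hrR, hvr⟩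

end SimpleGraph

namespace Finset

variable {α : Type*} [DecidableEq α] {R F A B : Finset α}

theorem union_inter_of_subset_of_disjoint (hR : R ⊆ B) (hF : Disjoint F B) : (R ∪ F) ∩ B = R := by
  rw [union_inter_distrib_right, inter_eq_left.2 hR, disjoint_iff_inter_eq_empty.1 hF,
    union_empty]

end Finset

open SimpleGraph Finset

theorem stmt_19_general {W : Type*} [Fintype W] [DecidableEq W] (G : SimpleGraph W)
    [DecidableRel G.Adj] (A B : Finset W)
    (hpart : ∀ x : W, (x ∈ A ∧ x ∉ B) ∨ (x ∉ A ∧ x ∈ B))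
    (hbip : ∀ x y, G.Adj x y → (x ∈ A ∧ y ∈ B) ∨ (x ∈ B ∧ y ∈ A))
    (hcov : ∀ u ∈ A, ∃ v ∈ B, G.Adj u v)
    (k : ℕ) :
    sSup {n : ℕ | ∃ W' : Finset W,
        (∀ v ∈ W', (∃ x ∈ W', G.Adj v x) ∨ ∀ x, ¬ G.Adj v x) ∧
        (W' ∩ B).card ≤ k ∧ n = (W' ∩ A).card} =
    sSup {n : ℕ | ∃ R : Finset W, R ⊆ B ∧ R.card ≤ k ∧
        n = (A.filter fun u => ∃ r ∈ R, G.Adj u r).card} := by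
  have hdisj : Disjoint A B :=
    disjoint_left.2 fun x hxA hxB => by rcases hpart x with h | h <;> tauto
  have hnbrA : ∀ u ∈ A, ∀ v, G.Adj u v → v ∈ B := fun u hu v huv => by
    rcases hbip u v huv with h | h
    exacts [h.2, absurd hu (disjoint_right.1 hdisj h.1)]
  have hnbrB : ∀ v ∈ B, ∀ u, G.Adj v u → u ∈ A := fun v hv u hvu => by
    rcases hbip v u hvu with h | h
    exacts [absurd h.1 (disjoint_right.1 hdisj hv), h.2]
  refine csSup_eq_csSup_of_forall_exists_le ?_ ?_
  · rintro _ ⟨S, hS, hSk, rfl⟩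
    refine ⟨_, ⟨S ∩ B, inter_subset_right, hSk, rfl⟩, card_le_card ?_⟩
    exact inter_subset_coveredBy_of_isOneNeighbourSet hS
      (fun u hu => (hcov u hu).imp fun _ h => h.2) hnbrA
  · rintro _ ⟨R, hRB, hRk, rfl⟩
    have hcovA : G.coveredBy A R ⊆ A := filter_subset _ _
    refine ⟨_, ⟨R ∪ G.coveredBy A R,
      isOneNeighbourSet_union_coveredBy fun v hv => hnbrB v (hRB hv), ?_, ?_⟩, le_rfl⟩
    · rw [union_inter_of_subset_of_disjoint hRB (hdisj.mono_left hcovA)]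
      exact hRk
    · rw [union_comm, union_inter_of_subset_of_disjoint hcovA (hdisj.mono_right hRB).symm]
      rfl

/-- In a bipartite graph with sides A (profit 1, weight 0) and B (profit 0, weight 1),
where every vertex of A has a neighbour in B, the maximum profit of a 1-neighbour set of
total weight at most k equals the maximum coverage of A by at most k vertices of B. -/
theorem stmt_19 {W : Type*} [Fintype W] [DecidableEq W] (G : SimpleGraph W)
    [DecidableRel G.Adj] (A B : Finset W)
    (hpart : ∀ x : W, (x ∈ A ∧ x ∉ B) ∨ (x ∉ A ∧ x ∈ B))
    (hbip : ∀ x y, G.Adj x y → (x ∈ A ∧ y ∈ B) ∨ (x ∈ B ∧ y ∈ A))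
    (hcov : ∀ u ∈ A, ∃ v ∈ B, G.Adj u v)
    (k : ℕ) (hk : 1 ≤ k) :
    sSup {n : ℕ | ∃ W' : Finset W,
        (∀ v ∈ W', (∃ x ∈ W', G.Adj v x) ∨ ∀ x, ¬ G.Adj v x) ∧
        (W' ∩ B).card ≤ k ∧ n = (W' ∩ A).card} =
    sSup {n : ℕ | ∃ R : Finset W, R ⊆ B ∧ R.card ≤ k ∧
        n = (A.filter fun u => ∃ r ∈ R, G.Adj u r).card} :=
  stmt_19_general G A B hpart hbip hcov k
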